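/- arXiv:2310.16940 — 3 statements merged into one kernel-verified Lean document; each statement's English description precedes it below -/
import Mathlib

section
/- Let 0 < p < 1, ε > 0, c > 0, γ > 0, let ξ : (1,∞) → [0,∞) be continuous and bounded as t → ∞, and let b : ℕ → [0,∞) satisfy Σ_j b_j^p < ∞. Then there exists a constant C ≥ 0, depending only on b, p, ε, c, γ and ξ, with the following property: every sequence d : 𝓕 → ℝ such that |d_0| ≤ c and such that, for every ν ∈ 𝓕 with ν ≠ 0 and every ρ : ℕ → [1,∞) with ρ_k > 1 for all k ∈ supp(ν) and with the series Σ_j ((ρ_j + ρ_j^{−1})/2 − 1) b_j convergent with sum at most ε, one has |d_ν| ≤ ∏_{k∈supp(ν)} ξ(ρ_k) ρ_k^{−ν_k} (c ν_k + 1)^γ, satisfies Σ_{ν∈𝓕} |d_ν|^p ≤ C^p. -/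
/-!
For `ν ≠ 0` apply the hypothesis with a radius `ρ` adapted to `ν`. Fix a finite set `E` of
coordinates off which `b` and the weights `a` below have small sums. On `E` put `ρ_k = 1 + δ`:
this yields a factor `∏_{k ∈ E} h(ν_k)` with `h` summable. Off `E` put
`ρ_k = T + ε ν_k / (w_k N)`, where `N = ∑_{k ∉ E} ν_k` and `w ≥ b` is positive and `p`-summable,
so that `ρ_k^{-ν_k} ≤ (w_k N / (ε ν_k))^{ν_k}` while `∑_k (ρ_k - 1) b_k` stays below `2ε`. Since
`N^N / ∏ ν_k^{ν_k} ≤ e^N N! / ∏ ν_k!`, the tail part of `|d_ν|^p` is bounded by the multinomial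
weight `(N! / ∏ ν_k!) ∏ a_k^{ν_k}` with `∑_{k ∉ E} a_k ≤ 1/2`, and by the multinomial theorem
these weights sum to at most `2^{-N}` over the tails of degree `N`. Altogether
`∑_ν |d_ν|^p ≤ c^p + 2 (∑ h)^{|E|}`.
-/

open Finset

variable {ι : Type*}

lemma Finset.sum_mul_le_sum_image_mul_sum_image {α β γ : Type*} [DecidableEq β] [DecidableEq γ]
    {S : Finset α} {f : α → β} {g : α → γ} {F : β → ℝ} {G : γ → ℝ}
    (hF : ∀ x, 0 ≤ F x) (hG : ∀ y, 0 ≤ G y) (hfg : Set.InjOn (fun a => (f a, g a)) S) :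
    ∑ a ∈ S, F (f a) * G (g a) ≤ (∑ x ∈ S.image f, F x) * ∑ y ∈ S.image g, G y := by
  rw [sum_mul_sum, ← sum_product',
    ← sum_image (g := fun a => (f a, g a)) (f := fun x => F x.1 * G x.2) hfg]
  refine sum_le_sum_of_subset_of_nonneg (fun x hx => ?_) fun x _ _ => mul_nonneg (hF _) (hG _)
  obtain ⟨a, ha, rfl⟩ := mem_image.1 hx
  exact mem_product.2 ⟨mem_image_of_mem f ha, mem_image_of_mem g ha⟩

lemma sum_prod_le_tsum_pow [Fintype ι] [DecidableEq ι] {h : ℕ → ℝ} (hh : ∀ n, 0 ≤ h n)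
    (hh_sum : Summable h) (S : Finset (ι → ℕ)) :
    ∑ x ∈ S, ∏ i, h (x i) ≤ (∑' n, h n) ^ Fintype.card ι := by
  set t : Finset ℕ := S.biUnion fun x => univ.image x
  calc ∑ x ∈ S, ∏ i, h (x i)
      ≤ ∑ x ∈ Fintype.piFinset fun _ => t, ∏ i, h (x i) := by
        refine sum_le_sum_of_subset_of_nonneg (fun x hx => ?_) fun x _ _ =>
          prod_nonneg fun i _ => hh _
        exact Fintype.mem_piFinset.2 fun i =>
          mem_biUnion.2 ⟨x, hx, mem_image_of_mem x (mem_univ i)⟩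
    _ = ∏ _i : ι, ∑ n ∈ t, h n := (prod_univ_sum _ _).symm
    _ ≤ ∏ _i : ι, ∑' n, h n :=
        prod_le_prod (fun _ _ => sum_nonneg fun n _ => hh n)
          fun _ _ => hh_sum.sum_le_tsum _ fun n _ => hh n
    _ = (∑' n, h n) ^ Fintype.card ι := by rw [prod_const, card_univ]

lemma Summable.of_rpow {b : ι → ℝ} (hb : ∀ j, 0 ≤ b j) {p : ℝ} (hp0 : 0 < p) (hp1 : p ≤ 1)
    (hbp : Summable fun j => b j ^ p) : Summable b := by
  have hmem : Memℓp b (ENNReal.ofReal p) := by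
    rw [memℓp_gen_iff (by rwa [ENNReal.toReal_ofReal hp0.le]), ENNReal.toReal_ofReal hp0.le]
    simpa only [Real.norm_of_nonneg (hb _)] using hbp
  have := (memℓp_gen_iff (by simp)).1 (hmem.of_exponent_ge (ENNReal.ofReal_le_one.2 hp1))
  simpa only [ENNReal.toReal_one, Real.rpow_one, Real.norm_of_nonneg (hb _)] using this

lemma summable_add_one_rpow_mul_geometric (s : ℝ) {r : ℝ} (hr0 : 0 < r) (hr1 : r < 1) :
    Summable fun n : ℕ => ((n : ℝ) + 1) ^ s * r ^ n := by
  have hnat : Summable fun n : ℕ => ((n : ℝ) + 1) ^ ⌈s⌉₊ * r ^ n := by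
    have := (summable_nat_add_iff 1).2 (summable_pow_mul_geometric_of_norm_lt_one ⌈s⌉₊
      (by rwa [Real.norm_of_nonneg hr0.le]) : Summable fun n : ℕ => (n : ℝ) ^ ⌈s⌉₊ * r ^ n)
    refine (this.mul_left r⁻¹).congr fun n => ?_
    push_cast
    field_simp
    ring
  refine hnat.of_nonneg_of_le (fun n => by positivity) fun n => ?_
  gcongr
  calc ((n : ℝ) + 1) ^ s ≤ ((n : ℝ) + 1) ^ (⌈s⌉₊ : ℝ) :=
        Real.rpow_le_rpow_of_exponent_le (by linarith [n.cast_nonneg (α := ℝ)]) (Nat.le_ceil s)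
    _ = ((n : ℝ) + 1) ^ ⌈s⌉₊ := Real.rpow_natCast _ _

lemma exists_pos_le_summable_rpow {b : ℕ → ℝ} (hb : ∀ j, 0 ≤ b j) {p : ℝ} (hp0 : 0 < p)
    (hp1 : p ≤ 1) (hbp : Summable fun j => b j ^ p) :
    ∃ w : ℕ → ℝ, (∀ k, 0 < w k) ∧ (∀ k, b k ≤ w k) ∧ Summable fun k => w k ^ p := by
  refine ⟨fun k => b k + (1 / 2) ^ k, fun k => by have := hb k; positivity,
    fun k => le_add_of_nonneg_right (by positivity), ?_⟩
  refine (hbp.add (summable_geometric_of_lt_one (r := (1 / 2 : ℝ) ^ p) (by positivity)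
    (Real.rpow_lt_one (by norm_num) (by norm_num) hp0))).of_nonneg_of_le
    (fun k => Real.rpow_nonneg (by have := hb k; positivity) p) fun k => ?_
  rw [Real.rpow_pow_comm (by norm_num)]
  exact Real.rpow_add_le_add_rpow (hb k) (by positivity) hp0.le hp1

lemma exists_finset_sum_le_of_disjoint {b a : ι → ℝ} (hb : ∀ k, 0 ≤ b k) (hb_sum : Summable b)
    (ha_sum : Summable a) {ε T : ℝ} (hε : 0 < ε) (hT : 1 < T) :
    ∃ E : Finset ι, ∃ δ > 0, δ * ∑ k ∈ E, b k ≤ ε / 2 ∧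
      (∀ t : Finset ι, Disjoint t E → (T - 1) * ∑ k ∈ t, b k ≤ ε / 2) ∧
      ∀ t : Finset ι, Disjoint t E → ∑ k ∈ t, a k ≤ 1 / 2 := by
  classical
  obtain ⟨E₁, hE₁⟩ := summable_iff_vanishing.1 hb_sum _
    (Iio_mem_nhds (show 0 < ε / 2 / (T - 1) by have := sub_pos.2 hT; positivity))
  obtain ⟨E₂, hE₂⟩ := summable_iff_vanishing.1 ha_sum _ (Iio_mem_nhds one_half_pos)
  have hbE : 0 ≤ ∑ k ∈ E₁ ∪ E₂, b k := sum_nonneg fun k _ => hb k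
  refine ⟨E₁ ∪ E₂, ε / 2 / (1 + ∑ k ∈ E₁ ∪ E₂, b k), by positivity, ?_, fun t ht => ?_,
    fun t ht => (hE₂ t (disjoint_union_right.1 ht).2).le⟩
  · rw [div_mul_eq_mul_div, div_le_iff₀ (by positivity)]
    nlinarith
  · have := (Set.mem_Iio.1 (hE₁ t (disjoint_union_right.1 ht).1)).le
    rwa [le_div_iff₀ (sub_pos.2 hT), mul_comm] at this

section Multinomial

noncomputable def multinomialWeight (a : ι → ℝ) (m : ι →₀ ℕ) : ℝ :=
  m.multinomial * m.prod fun k n => a k ^ n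

variable {a : ι → ℝ}

lemma multinomialWeight_nonneg (ha : ∀ k, 0 ≤ a k) (m : ι →₀ ℕ) : 0 ≤ multinomialWeight a m :=
  mul_nonneg (Nat.cast_nonneg _) (prod_nonneg fun k _ => pow_nonneg (ha k) _)

lemma multinomialWeight_eq_of_support_subset (a : ι → ℝ) {m : ι →₀ ℕ} {s : Finset ι}
    (hm : m.support ⊆ s) :
    multinomialWeight a m = Nat.multinomial s m * ∏ k ∈ s, a k ^ m k := by
  rw [multinomialWeight, Finsupp.multinomial_eq_of_support_subset hm,
    Finsupp.prod_of_support_subset m hm _ fun k _ => pow_zero (a k)]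

lemma sum_multinomialWeight_le_pow (ha : ∀ k, 0 ≤ a k) {s : Finset ι} {N : ℕ}
    {S : Finset (ι →₀ ℕ)} (hS : ∀ m ∈ S, m.support ⊆ s ∧ m.degree = N) :
    ∑ m ∈ S, multinomialWeight a m ≤ (∑ k ∈ s, a k) ^ N := by
  classical
  rw [sum_congr rfl fun m hm => multinomialWeight_eq_of_support_subset a (hS m hm).1,
    ← sum_image (g := fun m : ι →₀ ℕ => (m : ι → ℕ))
      (f := fun f => (Nat.multinomial s f : ℝ) * ∏ k ∈ s, a k ^ f k)
      DFunLike.coe_injective.injOn,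
    sum_pow_eq_sum_piAntidiag]
  refine sum_le_sum_of_subset_of_nonneg (fun f hf => ?_) fun f _ _ =>
    mul_nonneg (Nat.cast_nonneg _) (prod_nonneg fun k _ => pow_nonneg (ha k) _)
  obtain ⟨m, hm, rfl⟩ := mem_image.1 hf
  refine mem_piAntidiag.2 ⟨?_, fun k hk => (hS m hm).1 (Finsupp.mem_support_iff.2 hk)⟩
  rw [← (hS m hm).2, Finsupp.degree_apply]
  exact (sum_subset (hS m hm).1 fun k _ hk => Finsupp.notMem_support_iff.1 hk).symm

lemma sum_multinomialWeight_le (ha : ∀ k, 0 ≤ a k) {E : Finset ι} {q : ℝ} (hq : q < 1)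
    (haE : ∀ t : Finset ι, Disjoint t E → ∑ k ∈ t, a k ≤ q) {S : Finset (ι →₀ ℕ)}
    (hS : ∀ m ∈ S, Disjoint m.support E) :
    ∑ m ∈ S, multinomialWeight a m ≤ (1 - q)⁻¹ := by
  classical
  have hq0 : 0 ≤ q := by simpa using haE ∅ (disjoint_empty_left E)
  set s := S.biUnion Finsupp.support
  have hs : ∑ k ∈ s, a k ≤ q := haE s ((disjoint_biUnion_left _ _ _).2 hS)
  set D := S.sup Finsupp.degree
  have hdeg : ∀ m ∈ S, m.degree ∈ range (D + 1) := fun m hm =>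
    mem_range_succ_iff.2 (le_sup (f := fun m : ι →₀ ℕ => m.degree) hm)
  rw [← sum_fiberwise_of_maps_to hdeg]
  calc ∑ N ∈ range (D + 1), ∑ m ∈ S with m.degree = N, multinomialWeight a m
      ≤ ∑ N ∈ range (D + 1), q ^ N := by
        refine sum_le_sum fun N _ => (sum_multinomialWeight_le_pow ha fun m hm => ?_).trans
          (pow_le_pow_left₀ (sum_nonneg fun k _ => ha k) hs N)
        obtain ⟨hm, hmN⟩ := mem_filter.1 hm
        exact ⟨subset_biUnion_of_mem _ hm, hmN⟩
    _ ≤ ∑' N, q ^ N :=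
        (summable_geometric_of_lt_one hq0 hq).sum_le_tsum _ fun N _ => pow_nonneg hq0 N
    _ = (1 - q)⁻¹ := tsum_geometric_of_lt_one hq0 hq

lemma pow_degree_le_exp_mul_multinomial (m : ι →₀ ℕ) :
    (m.degree : ℝ) ^ m.degree ≤
      Real.exp 1 ^ m.degree * (m.multinomial * ∏ k ∈ m.support, (m k : ℝ) ^ m k) := by
  have hspec : (∏ k ∈ m.support, ((m k).factorial : ℝ)) * m.multinomial =
      (m.degree).factorial := by
    exact_mod_cast Nat.multinomial_spec m.support m
  calc (m.degree : ℝ) ^ m.degree ≤ Real.exp m.degree * (m.degree).factorial := by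
        have := Real.pow_div_factorial_le_exp (m.degree : ℝ) (Nat.cast_nonneg _) m.degree
        rwa [div_le_iff₀ (by positivity)] at this
    _ = Real.exp 1 ^ m.degree * (m.multinomial * ∏ k ∈ m.support, ((m k).factorial : ℝ)) := by
        rw [← Real.exp_one_pow, ← hspec, mul_comm (∏ k ∈ m.support, _)]
    _ ≤ Real.exp 1 ^ m.degree * (m.multinomial * ∏ k ∈ m.support, (m k : ℝ) ^ m k) := by
        gcongr with k
        exact_mod_cast Nat.factorial_le_pow (m k)

lemma prod_mul_degree_div_pow_le_multinomialWeight {x : ι → ℝ} (hx : ∀ k, 0 ≤ x k)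
    (m : ι →₀ ℕ) :
    ∏ k ∈ m.support, (x k * m.degree / m k) ^ m k ≤
      multinomialWeight (fun k => Real.exp 1 * x k) m := by
  have hpos : 0 < ∏ k ∈ m.support, (m k : ℝ) ^ m k := prod_pos fun k hk =>
    pow_pos (Nat.cast_pos.2 (Nat.pos_of_ne_zero (Finsupp.mem_support_iff.1 hk))) _
  have hdeg : ∀ y : ℝ, ∏ k ∈ m.support, y ^ m k = y ^ m.degree := fun y => by
    rw [prod_pow_eq_pow_sum, Finsupp.degree_apply]
  calc ∏ k ∈ m.support, (x k * m.degree / m k) ^ m k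
      = (∏ k ∈ m.support, x k ^ m k) * (m.degree : ℝ) ^ m.degree /
          ∏ k ∈ m.support, (m k : ℝ) ^ m k := by
        simp only [div_pow, mul_pow, prod_div_distrib, prod_mul_distrib, hdeg]
    _ ≤ (∏ k ∈ m.support, x k ^ m k) * (Real.exp 1 ^ m.degree * m.multinomial) := by
        rw [div_le_iff₀ hpos, mul_assoc, mul_assoc]
        refine mul_le_mul_of_nonneg_left ?_ (prod_nonneg fun k _ => pow_nonneg (hx k) _)
        linarith [pow_degree_le_exp_mul_multinomial m]
    _ = multinomialWeight (fun k => Real.exp 1 * x k) m := by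
        simp only [multinomialWeight, Finsupp.prod, mul_pow, prod_mul_distrib, hdeg]
        ring

lemma multinomialWeight_rpow_le (ha : ∀ k, 0 ≤ a k) {p : ℝ} (hp : p ≤ 1) (m : ι →₀ ℕ) :
    multinomialWeight a m ^ p ≤ multinomialWeight (fun k => a k ^ p) m := by
  have hmult : (1 : ℝ) ≤ m.multinomial := by exact_mod_cast Nat.multinomial_pos _ _
  have hprod : (m.prod fun k n => a k ^ n) ^ p = m.prod fun k n => (a k ^ p) ^ n := by
    rw [Finsupp.prod, Finsupp.prod, ← Real.finsetProd_rpow _ _ fun k _ => pow_nonneg (ha k) _]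
    exact prod_congr rfl fun k _ => (Real.rpow_pow_comm (ha k) p (m k)).symm
  have hprod_nonneg : 0 ≤ m.prod fun k n => a k ^ n :=
    prod_nonneg fun k _ => pow_nonneg (ha k) _
  rw [multinomialWeight, multinomialWeight, Real.mul_rpow (by positivity) hprod_nonneg, hprod]
  gcongr
  · exact prod_nonneg fun k _ => pow_nonneg (Real.rpow_nonneg (ha k) p) _
  · simpa using Real.rpow_le_rpow_of_exponent_le hmult hp

lemma sum_le_of_le_prod_mul_multinomialWeight [DecidableEq ι] {E : Finset ι} {h : ℕ → ℝ}
    (hh : ∀ n, 0 ≤ h n) (hh_sum : Summable h) (ha : ∀ k, 0 ≤ a k) {q : ℝ} (hq : q < 1)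
    (haE : ∀ t : Finset ι, Disjoint t E → ∑ k ∈ t, a k ≤ q) {f : (ι →₀ ℕ) → ℝ}
    {S : Finset (ι →₀ ℕ)}
    (hf : ∀ ν ∈ S, f ν ≤ (∏ i : E, h (ν i)) * multinomialWeight a (ν.filter (· ∉ E))) :
    ∑ ν ∈ S, f ν ≤ (∑' n, h n) ^ E.card * (1 - q)⁻¹ := by
  classical
  have hinj : Set.InjOn (fun ν : ι →₀ ℕ => ((fun i : E => ν i), ν.filter (· ∉ E))) S := by
    intro ν _ ν' _ hνν'
    simp only [Prod.mk.injEq] at hνν'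
    ext k
    by_cases hk : k ∈ E
    · exact congrFun hνν'.1 ⟨k, hk⟩
    · have := DFunLike.congr_fun hνν'.2 k
      rwa [Finsupp.filter_apply_pos (· ∉ E) ν hk, Finsupp.filter_apply_pos (· ∉ E) ν' hk] at this
  calc ∑ ν ∈ S, f ν
      ≤ ∑ ν ∈ S, (∏ i : E, h (ν i)) * multinomialWeight a (ν.filter (· ∉ E)) := sum_le_sum hf
    _ ≤ (∑ x ∈ S.image fun ν (i : E) => ν i, ∏ i, h (x i)) *
          ∑ m ∈ S.image (·.filter (· ∉ E)), multinomialWeight a m :=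
        sum_mul_le_sum_image_mul_sum_image (F := fun x : E → ℕ => ∏ i, h (x i))
          (fun x => prod_nonneg fun i _ => hh _) (multinomialWeight_nonneg ha) hinj
    _ ≤ (∑' n, h n) ^ E.card * (1 - q)⁻¹ := by
        refine mul_le_mul ?_ (sum_multinomialWeight_le ha hq haE fun m hm => ?_)
          (sum_nonneg fun m _ => multinomialWeight_nonneg ha m) (pow_nonneg (tsum_nonneg hh) _)
        · simpa only [Fintype.card_coe] using
            sum_prod_le_tsum_pow hh hh_sum (S.image fun ν (i : E) => ν i)
        · obtain ⟨ν, -, rfl⟩ := mem_image.1 hm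
          rw [Finsupp.support_filter]
          exact disjoint_left.2 fun k hk => (mem_filter.1 hk).2

end Multinomial

section DecayFactor

noncomputable def decayFactor (ξ : ℝ → ℝ) (c γ t : ℝ) (n : ℕ) : ℝ :=
  ξ t * t ^ (-(n : ℝ)) * (c * n + 1) ^ γ

noncomputable def headWeight (ξ : ℝ → ℝ) (c γ p t : ℝ) (n : ℕ) : ℝ :=
  if n = 0 then 1 else decayFactor ξ c γ t n ^ p

variable {ξ : ℝ → ℝ} {c γ t : ℝ}

lemma decayFactor_nonneg (hξ : 0 ≤ ξ t) (ht : 0 ≤ t) (hc : 0 ≤ c) (n : ℕ) :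
    0 ≤ decayFactor ξ c γ t n :=
  mul_nonneg (mul_nonneg hξ (Real.rpow_nonneg ht _)) (Real.rpow_nonneg (by positivity) _)

lemma headWeight_nonneg {p : ℝ} (hξ : 0 ≤ ξ t) (ht : 0 ≤ t) (hc : 0 ≤ c) (n : ℕ) :
    0 ≤ headWeight ξ c γ p t n := by
  unfold headWeight
  split_ifs
  · exact zero_le_one
  · exact Real.rpow_nonneg (decayFactor_nonneg hξ ht hc n) p

lemma decayFactor_le {K r : ℝ} (hξK : ξ t ≤ K) (hK : 1 ≤ K) (hc : 0 ≤ c) (hγ : 0 ≤ γ)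
    (hr : 0 < r) (hrt : r ≤ t) {n : ℕ} (hn : n ≠ 0) :
    decayFactor ξ c γ t n ≤ (K * (c + 1) ^ γ / r) ^ n := by
  have hpoly : (c * n + 1) ^ γ ≤ ((c + 1) ^ γ) ^ n := calc
    (c * n + 1) ^ γ ≤ ((c + 1) ^ n) ^ γ := by
      gcongr
      calc c * n + 1 = 1 + n * c := by ring
        _ ≤ (1 + c) ^ n := one_add_mul_le_pow (by linarith) n
        _ = (c + 1) ^ n := by rw [add_comm]
    _ = ((c + 1) ^ γ) ^ n := (Real.rpow_pow_comm (by linarith) γ n).symm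
  have hdecay : t ^ (-(n : ℝ)) ≤ (r ^ n)⁻¹ := by
    rw [Real.rpow_neg (hr.le.trans hrt), Real.rpow_natCast]
    gcongr
  calc decayFactor ξ c γ t n ≤ K ^ n * (r ^ n)⁻¹ * ((c + 1) ^ γ) ^ n :=
        mul_le_mul (mul_le_mul (hξK.trans (le_self_pow₀ hK hn)) hdecay
          (Real.rpow_nonneg (hr.le.trans hrt) _) (by positivity)) hpoly
          (Real.rpow_nonneg (by positivity) _) (by positivity)
    _ = (K * (c + 1) ^ γ / r) ^ n := by rw [div_pow, mul_pow]; ring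

lemma summable_headWeight {p : ℝ} (hξ : 0 ≤ ξ t) (ht : 1 < t) (hc : 0 ≤ c) (hγ : 0 ≤ γ)
    (hp : 0 < p) : Summable (headWeight ξ c γ p t) := by
  set B := (ξ t * (c + 1) ^ γ) ^ p with hB
  have hr0 : 0 < t ^ (-p) := Real.rpow_pos_of_pos (by linarith) _
  have hr1 : t ^ (-p) < 1 := Real.rpow_lt_one_of_one_lt_of_neg ht (by linarith)
  refine ((summable_add_one_rpow_mul_geometric (γ * p) hr0 hr1).mul_left (max 1 B)).of_nonneg_of_le
    (headWeight_nonneg hξ (by linarith) hc) fun n => ?_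
  unfold headWeight
  split_ifs with hn
  · simp [hn]
  have hbase : decayFactor ξ c γ t n ≤
      ξ t * (c + 1) ^ γ * (((n : ℝ) + 1) ^ γ * t ^ (-(n : ℝ))) := calc
    ξ t * t ^ (-(n : ℝ)) * (c * n + 1) ^ γ ≤ ξ t * t ^ (-(n : ℝ)) * ((c + 1) * (n + 1)) ^ γ := by
        gcongr
        nlinarith [n.cast_nonneg (α := ℝ)]
    _ = _ := by rw [Real.mul_rpow (by linarith) (by positivity)]; ring
  calc decayFactor ξ c γ t n ^ p
      ≤ (ξ t * (c + 1) ^ γ * (((n : ℝ) + 1) ^ γ * t ^ (-(n : ℝ)))) ^ p :=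
        Real.rpow_le_rpow (decayFactor_nonneg hξ (by linarith) hc n) hbase hp.le
    _ = B * (((n : ℝ) + 1) ^ (γ * p) * (t ^ (-p)) ^ n) := by
        rw [Real.mul_rpow (x := ξ t * (c + 1) ^ γ) (by positivity) (by positivity),
          Real.mul_rpow (x := ((n : ℝ) + 1) ^ γ) (by positivity) (by positivity),
          ← Real.rpow_mul (by positivity), ← Real.rpow_mul (by positivity),
          ← Real.rpow_natCast, ← Real.rpow_mul (by positivity), hB]
        ring_nf
    _ ≤ max 1 B * (((n : ℝ) + 1) ^ (γ * p) * (t ^ (-p)) ^ n) := by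
        gcongr
        exact le_max_right _ _

end DecayFactor

section Radius

structure IsAdmissibleRadius (b : ι → ℝ) (ε : ℝ) (ν : ι →₀ ℕ) (ρ : ι → ℝ) : Prop where
  one_le : ∀ k, 1 ≤ ρ k
  one_lt : ∀ k ∈ ν.support, 1 < ρ k
  summable : Summable fun j => ((ρ j + (ρ j)⁻¹) / 2 - 1) * b j
  tsum_le : ∑' j, ((ρ j + (ρ j)⁻¹) / 2 - 1) * b j ≤ ε

lemma IsAdmissibleRadius.of_sum_le {b ρ : ι → ℝ} {ε : ℝ} {ν : ι →₀ ℕ} (hb : ∀ k, 0 ≤ b k)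
    (hρ1 : ∀ k, 1 ≤ ρ k) (hρν : ∀ k ∈ ν.support, 1 < ρ k) (hρ : ∀ k ∉ ν.support, ρ k = 1)
    (hsum : ∑ k ∈ ν.support, (ρ k - 1) * b k ≤ 2 * ε) : IsAdmissibleRadius b ε ν ρ := by
  have hzero : ∀ k ∉ ν.support, ((ρ k + (ρ k)⁻¹) / 2 - 1) * b k = 0 := fun k hk => by
    rw [hρ k hk]; norm_num
  refine ⟨hρ1, hρν, summable_of_ne_finset_zero hzero, ?_⟩
  rw [tsum_eq_sum hzero]
  calc ∑ k ∈ ν.support, ((ρ k + (ρ k)⁻¹) / 2 - 1) * b k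
      ≤ ∑ k ∈ ν.support, (ρ k - 1) * b k / 2 := sum_le_sum fun k _ => by
        have : (ρ k)⁻¹ ≤ 1 := inv_le_one_of_one_le₀ (hρ1 k)
        nlinarith [hb k]
    _ ≤ ε := by rw [← sum_div]; linarith

variable [DecidableEq ι]

noncomputable def radius (E : Finset ι) (δ T ε : ℝ) (w : ι → ℝ) (ν : ι →₀ ℕ) (k : ι) : ℝ :=
  if ν k = 0 then 1
  else if k ∈ E then 1 + δ
  else T + ε * ν k / (w k * (ν.filter (· ∉ E)).degree)

variable {E : Finset ι} {δ T ε : ℝ} {w b : ι → ℝ} {ν : ι →₀ ℕ}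

lemma radius_of_mem {k : ι} (hk : ν k ≠ 0) (hkE : k ∈ E) : radius E δ T ε w ν k = 1 + δ := by
  simp [radius, hk, hkE]

lemma radius_of_notMem {k : ι} (hk : ν k ≠ 0) (hkE : k ∉ E) :
    radius E δ T ε w ν k = T + ε * ν k / (w k * (ν.filter (· ∉ E)).degree) := by
  simp [radius, hk, hkE]

lemma one_le_radius (hδ : 0 ≤ δ) (hT : 1 ≤ T) (hε : 0 ≤ ε) (hw : ∀ k, 0 ≤ w k) (k : ι) :
    1 ≤ radius E δ T ε w ν k := by
  have := hw k
  unfold radius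
  split_ifs
  · rfl
  · linarith
  · have : 0 ≤ ε * ν k / (w k * (ν.filter (· ∉ E)).degree) := by positivity
    linarith

lemma one_lt_radius {k : ι} (hk : ν k ≠ 0) (hδ : 0 < δ) (hT : 1 < T) (hε : 0 ≤ ε)
    (hw : 0 ≤ w k) : 1 < radius E δ T ε w ν k := by
  by_cases hkE : k ∈ E
  · rw [radius_of_mem hk hkE]; linarith
  · rw [radius_of_notMem hk hkE]
    have : 0 ≤ ε * ν k / (w k * (ν.filter (· ∉ E)).degree) := by positivity
    linarith

lemma sum_radius_sub_one_mul_of_mem_le (hb : ∀ k, 0 ≤ b k) (hδ : 0 ≤ δ) :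
    ∑ k ∈ ν.support with k ∈ E, (radius E δ T ε w ν k - 1) * b k ≤ δ * ∑ k ∈ E, b k := calc
  _ = δ * ∑ k ∈ ν.support with k ∈ E, b k := by
      rw [mul_sum]
      refine sum_congr rfl fun k hk => ?_
      rw [mem_filter, Finsupp.mem_support_iff] at hk
      rw [radius_of_mem hk.1 hk.2, add_sub_cancel_left]
  _ ≤ δ * ∑ k ∈ E, b k := mul_le_mul_of_nonneg_left (sum_le_sum_of_subset_of_nonneg
      (fun k hk => (mem_filter.1 hk).2) fun k _ _ => hb k) hδ

lemma sum_radius_sub_one_mul_of_notMem_le (hbw : ∀ k, b k ≤ w k)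
    (hw : ∀ k, 0 < w k) (hε : 0 ≤ ε) :
    ∑ k ∈ ν.support with k ∉ E, (radius E δ T ε w ν k - 1) * b k ≤
      (T - 1) * ∑ k ∈ ν.support with k ∉ E, b k + ε := by
  set N : ℝ := Nat.cast (ν.filter (· ∉ E)).degree with hN_def
  have hN : ∑ k ∈ ν.support with k ∉ E, (ν k : ℝ) = N := by
    rw [hN_def, Finsupp.degree_apply, Finsupp.support_filter, Nat.cast_sum]
    exact sum_congr rfl fun k hk => by rw [Finsupp.filter_apply_pos (· ∉ E) ν (mem_filter.1 hk).2]
  calc ∑ k ∈ ν.support with k ∉ E, (radius E δ T ε w ν k - 1) * b k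
      ≤ ∑ k ∈ ν.support with k ∉ E, ((T - 1) * b k + ε * (ν k / N)) := sum_le_sum fun k hk => by
        rw [mem_filter, Finsupp.mem_support_iff] at hk
        rw [radius_of_notMem hk.1 hk.2, add_sub_right_comm, add_mul]
        have : ε * ν k / (w k * N) * b k ≤ ε * (ν k / N) := calc
          _ = ε * (ν k / N) * (b k / w k) := by ring
          _ ≤ ε * (ν k / N) := mul_le_of_le_one_right (by positivity)
            (div_le_one_of_le₀ (hbw k) (hw k).le)
        linarith
    _ = (T - 1) * ∑ k ∈ ν.support with k ∉ E, b k + ε * (N / N) := by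
        rw [sum_add_distrib, ← mul_sum, ← mul_sum, ← sum_div, hN]
    _ ≤ (T - 1) * ∑ k ∈ ν.support with k ∉ E, b k + ε := by
        gcongr
        exact mul_le_of_le_one_right hε (div_self_le_one N)

lemma isAdmissibleRadius_radius (hb : ∀ k, 0 ≤ b k) (hbw : ∀ k, b k ≤ w k) (hw : ∀ k, 0 < w k)
    (hδ : 0 < δ) (hT : 1 < T) (hε : 0 ≤ ε) (hbE : δ * ∑ k ∈ E, b k ≤ ε / 2)
    (hbE_compl : ∀ t : Finset ι, Disjoint t E → (T - 1) * ∑ k ∈ t, b k ≤ ε / 2) (ν : ι →₀ ℕ) :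
    IsAdmissibleRadius b ε ν (radius E δ T ε w ν) := by
  refine .of_sum_le hb (one_le_radius hδ.le hT.le hε fun k => (hw k).le)
    (fun k hk => one_lt_radius (Finsupp.mem_support_iff.1 hk) hδ hT hε (hw k).le)
    (fun k hk => by simp_all [radius]) ?_
  have := sum_radius_sub_one_mul_of_mem_le (E := E) (T := T) (ε := ε) (w := w) (ν := ν) hb hδ.le
  have := sum_radius_sub_one_mul_of_notMem_le (E := E) (δ := δ) (T := T) (ν := ν) hbw hw hε
  have := hbE_compl _ (disjoint_left.2 fun k hk => (mem_filter.1 hk).2 :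
    Disjoint (ν.support.filter (· ∉ E)) E)
  rw [← sum_filter_add_sum_filter_not _ (· ∈ E)]
  linarith

variable {ξ : ℝ → ℝ} {c γ K : ℝ}

lemma prod_decayFactor_radius_of_mem_rpow (p : ℝ) :
    ∏ k ∈ ν.support with k ∈ E, decayFactor ξ c γ (radius E δ T ε w ν k) (ν k) ^ p =
      ∏ i : E, headWeight ξ c γ p (1 + δ) (ν i) := calc
  _ = ∏ k ∈ E with ν k ≠ 0, decayFactor ξ c γ (1 + δ) (ν k) ^ p := by
      rw [show ν.support.filter (· ∈ E) = E.filter (ν · ≠ 0) by ext; simp [and_comm]]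
      exact prod_congr rfl fun k hk => by
        rw [radius_of_mem (mem_filter.1 hk).2 (mem_filter.1 hk).1]
  _ = ∏ i : E, headWeight ξ c γ p (1 + δ) (ν i) := by
      rw [prod_filter, prod_coe_sort E fun k => headWeight ξ c γ p (1 + δ) (ν k)]
      simp only [headWeight, ite_not]

lemma prod_decayFactor_radius_of_notMem_le (hξ0 : ∀ t, T ≤ t → 0 ≤ ξ t)
    (hξK : ∀ t, T ≤ t → ξ t ≤ K) (hK : 1 ≤ K) (hc : 0 ≤ c) (hγ : 0 ≤ γ) (hw : ∀ k, 0 < w k)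
    (hT : 0 ≤ T) (hε : 0 < ε) :
    ∏ k ∈ ν.support with k ∉ E, decayFactor ξ c γ (radius E δ T ε w ν k) (ν k) ≤
      multinomialWeight (fun k => Real.exp 1 * (K * (c + 1) ^ γ / ε * w k))
        (ν.filter (· ∉ E)) := by
  set τ := ν.filter (· ∉ E)
  have hτ : ∀ k ∈ τ.support, ν k ≠ 0 ∧ k ∉ E ∧ τ k = ν k := fun k hk => by
    rw [Finsupp.support_filter, mem_filter, Finsupp.mem_support_iff] at hk
    exact ⟨hk.1, hk.2, Finsupp.filter_apply_pos (· ∉ E) ν hk.2⟩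
  have hdeg : ∀ k ∈ τ.support, (0 : ℝ) < τ.degree := fun k hk => by
    rw [Nat.cast_pos, Finsupp.degree_apply]
    exact sum_pos' (fun _ _ => Nat.zero_le _)
      ⟨k, hk, Nat.pos_of_ne_zero (Finsupp.mem_support_iff.1 hk)⟩
  rw [← Finsupp.support_filter]
  refine (prod_le_prod (fun k hk => ?_) fun k hk => ?_).trans
    (prod_mul_degree_div_pow_le_multinomialWeight
      (x := fun k => K * (c + 1) ^ γ / ε * w k) (fun k => by have := hw k; positivity) τ)
  all_goals
    obtain ⟨hk0, hkE, hτk⟩ := hτ k hk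
    have hr : 0 < ε * ν k / (w k * τ.degree) := by
      have := hw k; have := hdeg k hk
      have : (0 : ℝ) < ν k := Nat.cast_pos.2 (Nat.pos_of_ne_zero hk0)
      positivity
    rw [radius_of_notMem hk0 hkE]
  · exact decayFactor_nonneg (hξ0 _ (by linarith)) (by linarith) hc _
  · refine (decayFactor_le (hξK _ (by linarith)) hK hc hγ hr (by linarith) hk0).trans_eq ?_
    rw [hτk, div_div_eq_mul_div]
    ring

lemma prod_decayFactor_radius_rpow_le (hξ0 : ∀ t, 1 < t → 0 ≤ ξ t)
    (hξK : ∀ t, T ≤ t → ξ t ≤ K) (hK : 1 ≤ K) (hc : 0 ≤ c) (hγ : 0 ≤ γ) (hw : ∀ k, 0 < w k)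
    (hδ : 0 < δ) (hT : 1 < T) (hε : 0 < ε) {p : ℝ} (hp0 : 0 ≤ p) (hp1 : p ≤ 1) :
    (∏ k ∈ ν.support, decayFactor ξ c γ (radius E δ T ε w ν k) (ν k)) ^ p ≤
      (∏ i : E, headWeight ξ c γ p (1 + δ) (ν i)) *
        multinomialWeight (fun k => (Real.exp 1 * (K * (c + 1) ^ γ / ε * w k)) ^ p)
          (ν.filter (· ∉ E)) := by
  have hnonneg : ∀ (P : ι → Prop) [DecidablePred P], ∀ k ∈ ν.support.filter P,
      0 ≤ decayFactor ξ c γ (radius E δ T ε w ν k) (ν k) := fun P _ k hk => by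
    have := one_lt_radius (E := E) (T := T)
      (Finsupp.mem_support_iff.1 (mem_filter.1 hk).1) hδ hT hε.le (hw k).le
    exact decayFactor_nonneg (hξ0 _ this) (by linarith) hc _
  rw [← prod_filter_mul_prod_filter_not ν.support (· ∈ E),
    Real.mul_rpow (prod_nonneg (hnonneg _)) (prod_nonneg (hnonneg _)),
    ← Real.finsetProd_rpow _ _ (hnonneg _), prod_decayFactor_radius_of_mem_rpow]
  gcongr
  · exact prod_nonneg fun k _ => headWeight_nonneg (hξ0 _ (by linarith)) (by linarith) hc _
  calc (∏ k ∈ ν.support with k ∉ E, decayFactor ξ c γ (radius E δ T ε w ν k) (ν k)) ^ p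
      ≤ multinomialWeight (fun k => Real.exp 1 * (K * (c + 1) ^ γ / ε * w k))
          (ν.filter (· ∉ E)) ^ p :=
        Real.rpow_le_rpow (prod_nonneg (hnonneg _)) (prod_decayFactor_radius_of_notMem_le
          (fun t ht => hξ0 t (by linarith)) hξK hK hc hγ hw (by linarith) hε) hp0
    _ ≤ _ := multinomialWeight_rpow_le (fun k => by have := hw k; positivity) hp1 _

lemma sum_rpow_abs_le_of_le_prod_decayFactor {ξ : ℝ → ℝ} {c γ K p : ℝ}
    (hξ0 : ∀ t, 1 < t → 0 ≤ ξ t) (hξK : ∀ t, T ≤ t → ξ t ≤ K) (hK : 1 ≤ K) (hc : 0 ≤ c)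
    (hγ : 0 ≤ γ) (hp0 : 0 < p) (hp1 : p ≤ 1) (hb : ∀ k, 0 ≤ b k) (hbw : ∀ k, b k ≤ w k)
    (hw : ∀ k, 0 < w k) (hδ : 0 < δ) (hT : 1 < T) (hε : 0 < ε)
    (hbE : δ * ∑ k ∈ E, b k ≤ ε / 2)
    (hbE_compl : ∀ t : Finset ι, Disjoint t E → (T - 1) * ∑ k ∈ t, b k ≤ ε / 2)
    (haE : ∀ t : Finset ι, Disjoint t E →
      ∑ k ∈ t, (Real.exp 1 * (K * (c + 1) ^ γ / ε * w k)) ^ p ≤ 1 / 2)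
    {d : (ι →₀ ℕ) → ℝ} (hd0 : |d 0| ≤ c)
    (hd : ∀ ν ≠ 0, ∀ ρ, IsAdmissibleRadius b ε ν ρ →
      |d ν| ≤ ∏ k ∈ ν.support, decayFactor ξ c γ (ρ k) (ν k))
    (u : Finset (ι →₀ ℕ)) :
    ∑ ν ∈ u, |d ν| ^ p ≤ c ^ p + 2 * (∑' n, headWeight ξ c γ p (1 + δ) n) ^ E.card := by
  have hξδ : 0 ≤ ξ (1 + δ) := hξ0 _ (by linarith)
  have hpointwise : ∀ ν ∈ u.erase 0, |d ν| ^ p ≤ (∏ i : E, headWeight ξ c γ p (1 + δ) (ν i)) *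
      multinomialWeight (fun k => (Real.exp 1 * (K * (c + 1) ^ γ / ε * w k)) ^ p)
        (ν.filter (· ∉ E)) := fun ν hν =>
    (Real.rpow_le_rpow (abs_nonneg _) (hd ν (ne_of_mem_erase hν) _
      (isAdmissibleRadius_radius hb hbw hw hδ hT hε.le hbE hbE_compl ν)) hp0.le).trans
      (prod_decayFactor_radius_rpow_le hξ0 hξK hK hc hγ hw hδ hT hε hp0.le hp1)
  calc ∑ ν ∈ u, |d ν| ^ p ≤ ∑ ν ∈ insert 0 u, |d ν| ^ p :=
        sum_le_sum_of_subset_of_nonneg (subset_insert _ _) fun _ _ _ => by positivity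
    _ = |d 0| ^ p + ∑ ν ∈ u.erase 0, |d ν| ^ p := by
        rw [← add_sum_erase _ _ (mem_insert_self 0 u), erase_insert_eq_erase]
    _ ≤ c ^ p + (∑' n, headWeight ξ c γ p (1 + δ) n) ^ E.card * (1 - 1 / 2)⁻¹ :=
        add_le_add (Real.rpow_le_rpow (abs_nonneg _) hd0 hp0.le)
          (sum_le_of_le_prod_mul_multinomialWeight (headWeight_nonneg hξδ (by linarith) hc)
            (summable_headWeight hξδ (by linarith) hc hγ hp0)
            (fun k => by have := hw k; positivity) (by norm_num) haE hpointwise)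
    _ = c ^ p + 2 * (∑' n, headWeight ξ c γ p (1 + δ) n) ^ E.card := by norm_num [mul_comm]

end Radius

theorem stmt0_general
    (p ε c γ : ℝ) (hp0 : 0 < p) (hp1 : p < 1) (hε : 0 < ε) (hc : 0 < c) (hγ : 0 < γ)
    (ξ : ℝ → ℝ)
    (hξnonneg : ∀ t : ℝ, 1 < t → 0 ≤ ξ t)
    (hξbdd : ∃ M T : ℝ, 0 ≤ M ∧ 1 < T ∧ ∀ t : ℝ, T ≤ t → ξ t ≤ M)
    (b : ℕ → ℝ) (hb : ∀ j, 0 ≤ b j) (hbp : Summable fun j => b j ^ p) :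
    ∃ C : ℝ, 0 ≤ C ∧
      ∀ d : (ℕ →₀ ℕ) → ℝ,
        |d 0| ≤ c →
        (∀ ν : ℕ →₀ ℕ, ν ≠ 0 →
          ∀ ρ : ℕ → ℝ, (∀ k, 1 ≤ ρ k) → (∀ k ∈ ν.support, 1 < ρ k) →
            Summable (fun j => ((ρ j + (ρ j)⁻¹) / 2 - 1) * b j) →
            (∑' j, ((ρ j + (ρ j)⁻¹) / 2 - 1) * b j) ≤ ε →
            |d ν| ≤ ∏ k ∈ ν.support,
              ξ (ρ k) * (ρ k) ^ (-(ν k : ℝ)) * (c * (ν k : ℝ) + 1) ^ γ) →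
        Summable (fun ν : ℕ →₀ ℕ => |d ν| ^ p) ∧
          (∑' ν : ℕ →₀ ℕ, |d ν| ^ p) ≤ C ^ p := by
  obtain ⟨M, T, -, hT, hξM⟩ := hξbdd
  have hξK : ∀ t, T ≤ t → ξ t ≤ max M 1 := fun t ht => (hξM t ht).trans (le_max_left _ _)
  obtain ⟨w, hw, hbw, hwp⟩ := exists_pos_le_summable_rpow hb hp0 hp1.le hbp
  have ha : Summable fun k => (Real.exp 1 * (max M 1 * (c + 1) ^ γ / ε * w k)) ^ p :=
    (hwp.mul_left ((Real.exp 1 * (max M 1 * (c + 1) ^ γ / ε)) ^ p)).congr fun k => by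
      rw [← Real.mul_rpow (by positivity) (hw k).le, mul_assoc]
  obtain ⟨E, δ, hδ, hbE, hbE_compl, haE⟩ :=
    exists_finset_sum_le_of_disjoint hb (Summable.of_rpow hb hp0 hp1.le hbp) ha hε hT
  set H := ∑' n, headWeight ξ c γ p (1 + δ) n
  have hCp : 0 ≤ c ^ p + 2 * H ^ E.card := by
    have : 0 ≤ H := tsum_nonneg (headWeight_nonneg (hξnonneg _ (by linarith)) (by linarith) hc.le)
    positivity
  refine ⟨(c ^ p + 2 * H ^ E.card) ^ p⁻¹, by positivity, fun d hd0 hd => ?_⟩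
  have hbound := sum_rpow_abs_le_of_le_prod_decayFactor hξnonneg hξK (le_max_right _ _) hc.le
    hγ.le hp0 hp1.le hb hbw hw hδ hT hε hbE hbE_compl haE hd0
    fun ν hν ρ hρ => hd ν hν ρ hρ.one_le hρ.one_lt hρ.summable hρ.tsum_le
  have hsum := summable_of_sum_le (fun ν => by positivity) hbound
  rw [Real.rpow_inv_rpow hCp hp0.ne']
  exact ⟨hsum, hsum.tsum_le_of_sum_le hbound⟩

/-- Lemma on abstract summability, part (a), first half.
If `0 < p < 1`, `ε, c, γ > 0`, `ξ : (1,∞) → [0,∞)` is continuous and bounded as `t → ∞`,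
and `b : ℕ → [0,∞)` is `ℓ^p`-summable, then there is a constant `C` depending only on these
data such that every sequence `d` on the multi-indices `𝓕 = ℕ →₀ ℕ` satisfying
`|d 0| ≤ c` and the product bound for all admissible `ρ` is `ℓ^p`-summable with
`∑ |d ν|^p ≤ C^p`. -/
theorem stmt0
    (p ε c γ : ℝ) (hp0 : 0 < p) (hp1 : p < 1) (hε : 0 < ε) (hc : 0 < c) (hγ : 0 < γ)
    (ξ : ℝ → ℝ) (hξcont : ContinuousOn ξ (Set.Ioi (1 : ℝ)))
    (hξnonneg : ∀ t : ℝ, 1 < t → 0 ≤ ξ t)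
    (hξbdd : ∃ M T : ℝ, 0 ≤ M ∧ 1 < T ∧ ∀ t : ℝ, T ≤ t → ξ t ≤ M)
    (b : ℕ → ℝ) (hb : ∀ j, 0 ≤ b j) (hbp : Summable fun j => b j ^ p) :
    ∃ C : ℝ, 0 ≤ C ∧
      ∀ d : (ℕ →₀ ℕ) → ℝ,
        |d 0| ≤ c →
        (∀ ν : ℕ →₀ ℕ, ν ≠ 0 →
          ∀ ρ : ℕ → ℝ, (∀ k, 1 ≤ ρ k) → (∀ k ∈ ν.support, 1 < ρ k) →
            Summable (fun j => ((ρ j + (ρ j)⁻¹) / 2 - 1) * b j) →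
            (∑' j, ((ρ j + (ρ j)⁻¹) / 2 - 1) * b j) ≤ ε →
            |d ν| ≤ ∏ k ∈ ν.support,
              ξ (ρ k) * (ρ k) ^ (-(ν k : ℝ)) * (c * (ν k : ℝ) + 1) ^ γ) →
        Summable (fun ν : ℕ →₀ ℕ => |d ν| ^ p) ∧
          (∑' ν : ℕ →₀ ℕ, |d ν| ^ p) ≤ C ^ p :=
  stmt0_general p ε c γ hp0 hp1 hε hc hγ ξ hξnonneg hξbdd b hb hbp
end

section
/- Let c̃ > 0, γ̃ > 0, ε > 0, d ∈ ℕ, and let b̃ : ℕ → (0,∞) be a nonincreasing sequence. Let β ≥ e · (max{c̃, 1} + 1)^{γ̃}. For ν ∈ 𝓕 set M(ν) = Σ_{j > d} ν_j and B(ν) = ∏_{j > d, ν_j ≠ 0} (c̃ ν_j + 1)^{γ̃} · ( β + ε ν_j / (4 b̃_j M(ν)) )^{−ν_j}, with the empty product equal to 1. Then B(ν + e_i) ≤ B(ν) for every ν ∈ 𝓕 and every i > d. -/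
open scoped BigOperators

/-- `M(ν) = ∑_{j > d} ν_j` for a finitely supported multi-index `ν`. -/
def tailSum (d : ℕ) (ν : ℕ →₀ ℕ) : ℕ :=
  ∑ j ∈ ν.support.filter (fun j => d < j), ν j

/-- The product
`B(ν) = ∏_{j > d, ν_j ≠ 0} (c̃ ν_j + 1)^γ̃ · (β + ε ν_j / (4 b̃_j M(ν)))^{-ν_j}`
(with the empty product equal to `1`). -/
noncomputable def Bprod (ctil γtil ε : ℝ) (d : ℕ) (btil : ℕ → ℝ) (β : ℝ)
    (ν : ℕ →₀ ℕ) : ℝ :=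
  ∏ j ∈ ν.support.filter (fun j => d < j),
    (ctil * (ν j : ℝ) + 1) ^ γtil *
      (β + ε * (ν j : ℝ) / (4 * btil j * (tailSum d ν : ℝ))) ^ (-(ν j : ℝ))

open Finset Real

/-!
Write `B(ν)` as a product of factors `bFactor … M (ν j)` with `M = M(ν)`. Passing from `ν` to
`ν + e_i` raises `M` by one, which multiplies each factor `j ≠ i` by at most `(1 + 1/M)^{ν_j}`,
in total by at most `(1 + 1/M)^M ≤ e`. The factor at `i` shrinks by at least `e⁻¹`: the base
`β + ε n / (4 b̃ M)` does not decrease under `(n, M) ↦ (n + 1, M + 1)` when `n ≤ M`, the extra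
power of it is at least `β ≥ e (c̃ + 1)^γ̃`, and `c̃ (n + 1) + 1 ≤ (c̃ + 1)(c̃ n + 1)`.
-/

lemma div_le_add_one_div_add_one {x y : ℝ} (hx : 0 ≤ x) (hxy : x ≤ y) :
    x / y ≤ (x + 1) / (y + 1) := by
  rcases (hx.trans hxy).eq_or_lt with rfl | hy
  · rw [div_zero, zero_add, div_one]
    linarith
  · rw [div_le_div_iff₀ hy (by positivity)]
    linarith

noncomputable def bFactor (c γ ε b β M : ℝ) (n : ℕ) : ℝ :=
  (c * n + 1) ^ γ * (β + ε * n / (4 * b * M)) ^ (-(n : ℝ))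

@[simp] lemma bFactor_zero (c γ ε b β M : ℝ) : bFactor c γ ε b β M 0 = 1 := by
  simp [bFactor]

lemma bFactor_nonneg {c γ ε b β M : ℝ} (hc : 0 ≤ c) (hε : 0 ≤ ε) (hb : 0 ≤ b) (hβ : 0 ≤ β)
    (hM : 0 ≤ M) (n : ℕ) : 0 ≤ bFactor c γ ε b β M n := by
  unfold bFactor
  positivity

lemma bFactor_base_le_one_add_inv_mul {ε b β M : ℝ} (hε : 0 ≤ ε) (hb : 0 < b) (hβ : 0 ≤ β)
    (hM : 0 ≤ M) (n : ℕ) :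
    β + ε * n / (4 * b * M) ≤ (1 + M⁻¹) * (β + ε * n / (4 * b * (M + 1))) := by
  rcases hM.eq_or_lt with rfl | hM
  · simp only [inv_zero, mul_zero, div_zero, add_zero, one_mul, zero_add, mul_one]
    exact le_add_of_nonneg_right (by positivity)
  · have : (1 + M⁻¹) * (β + ε * n / (4 * b * (M + 1))) = β + β / M + ε * n / (4 * b * M) := by
      field_simp
    rw [this]
    have := div_nonneg hβ hM.le
    linarith

lemma bFactor_add_one_le {c γ ε b β M : ℝ} (hc : 0 ≤ c) (hε : 0 ≤ ε) (hb : 0 < b)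
    (hβ : 0 < β) (hM : 0 ≤ M) (n : ℕ) :
    bFactor c γ ε b β (M + 1) n ≤ (1 + M⁻¹) ^ n * bFactor c γ ε b β M n := by
  have hq₀ : 0 < β + ε * n / (4 * b * M) := by positivity
  have hq₁ : 0 < β + ε * n / (4 * b * (M + 1)) := by positivity
  have hq := bFactor_base_le_one_add_inv_mul hε hb hβ.le hM n
  rw [bFactor, bFactor, rpow_neg hq₀.le, rpow_neg hq₁.le, rpow_natCast, rpow_natCast,
    mul_left_comm]
  gcongr
  rw [← div_eq_mul_inv, le_div_iff₀ (by positivity), ← div_eq_inv_mul, div_le_iff₀ (by positivity),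
    ← mul_pow]
  exact pow_le_pow_left₀ hq₀.le hq n

lemma bFactor_succ_le {c γ ε b β M : ℝ} (hc : 0 ≤ c) (hγ : 0 ≤ γ) (hε : 0 ≤ ε) (hb : 0 < b)
    (hβ : exp 1 * (c + 1) ^ γ ≤ β) {m : ℕ} (hm : (m : ℝ) ≤ M) :
    bFactor c γ ε b β (M + 1) (m + 1) ≤ (exp 1)⁻¹ * bFactor c γ ε b β M m := by
  have hβ₀ : 0 < β := lt_of_lt_of_le (by positivity) hβ
  have hM : 0 ≤ M := m.cast_nonneg.trans hm
  set q₀ := β + ε * m / (4 * b * M)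
  set q₁ := β + ε * (m + 1 : ℕ) / (4 * b * (M + 1))
  have hq₀ : 0 < q₀ := by positivity
  have hβq₁ : β ≤ q₁ := le_add_of_nonneg_right (by positivity)
  have hq₀q₁ : q₀ ≤ q₁ := by
    simp only [q₀, q₁, mul_div_mul_comm ε, Nat.cast_succ]
    gcongr β + ε / (4 * b) * ?_
    exact div_le_add_one_div_add_one m.cast_nonneg hm
  have hpoly : (c * (m + 1 : ℕ) + 1) ^ γ ≤ (c + 1) ^ γ * (c * m + 1) ^ γ := by
    rw [← mul_rpow (by positivity) (by positivity)]
    gcongr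
    push_cast
    nlinarith [mul_nonneg (mul_nonneg hc hc) m.cast_nonneg]
  have hpow : (q₁ ^ (m + 1))⁻¹ ≤ β⁻¹ * (q₀ ^ m)⁻¹ := by
    rw [← mul_inv, pow_succ']
    gcongr
  have hconst : (c + 1) ^ γ * β⁻¹ ≤ (exp 1)⁻¹ := by
    rw [← div_eq_mul_inv, div_le_iff₀ hβ₀, inv_mul_eq_div, le_div_iff₀ (exp_pos 1)]
    linarith
  rw [bFactor, bFactor, rpow_neg hq₀.le, rpow_neg (hq₀.trans_le hq₀q₁).le,
    rpow_natCast, rpow_natCast]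
  calc (c * (m + 1 : ℕ) + 1) ^ γ * (q₁ ^ (m + 1))⁻¹
      ≤ ((c + 1) ^ γ * (c * m + 1) ^ γ) * (β⁻¹ * (q₀ ^ m)⁻¹) := by gcongr
    _ = ((c + 1) ^ γ * β⁻¹) * ((c * m + 1) ^ γ * (q₀ ^ m)⁻¹) := by ring
    _ ≤ (exp 1)⁻¹ * ((c * m + 1) ^ γ * (q₀ ^ m)⁻¹) := by gcongr

section MultiIndex

variable {d : ℕ} {ν : ℕ →₀ ℕ} {s : Finset ℕ}

lemma tailSum_eq_sum_of_subset (hs : ν.support.filter (d < ·) ⊆ s) (hd : ∀ j ∈ s, d < j) :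
    tailSum d ν = ∑ j ∈ s, ν j :=
  sum_subset hs fun j hjs hj => by simpa [hd j hjs] using hj

lemma Bprod_eq_prod_bFactor (c γ ε β : ℝ) (b : ℕ → ℝ) (hs : ν.support.filter (d < ·) ⊆ s)
    (hd : ∀ j ∈ s, d < j) :
    Bprod c γ ε d b β ν = ∏ j ∈ s, bFactor c γ ε (b j) β (tailSum d ν) (ν j) :=
  prod_subset hs fun j hjs hj => by
    simp [show ν j = 0 by simpa [hd j hjs] using hj]

lemma filter_support_add_single_subset (ν : ℕ →₀ ℕ) (i : ℕ) :
    (ν + Finsupp.single i 1).support.filter (d < ·) ⊆ insert i (ν.support.filter (d < ·)) := by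
  intro j
  by_cases hj : j = i <;> simp [hj]

lemma tailSum_add_single {i : ℕ} (hi : d < i) (ν : ℕ →₀ ℕ) :
    tailSum d (ν + Finsupp.single i 1) = tailSum d ν + 1 := by
  have hd : ∀ j ∈ insert i (ν.support.filter (d < ·)), d < j := by
    simp +contextual [hi]
  rw [tailSum_eq_sum_of_subset (filter_support_add_single_subset ν i) hd,
    tailSum_eq_sum_of_subset (subset_insert _ _) hd, Finsupp.coe_add]
  simp [sum_add_distrib, Finsupp.single_apply]

end MultiIndex

theorem Bprod_add_single_le {c γ ε β : ℝ} (hc : 0 ≤ c) (hγ : 0 ≤ γ) (hε : 0 ≤ ε) {d : ℕ}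
    {b : ℕ → ℝ} (hb : ∀ j, 0 < b j) (hβ : exp 1 * (c + 1) ^ γ ≤ β) (ν : ℕ →₀ ℕ) {i : ℕ}
    (hi : d < i) :
    Bprod c γ ε d b β (ν + Finsupp.single i 1) ≤ Bprod c γ ε d b β ν := by
  set S := insert i (ν.support.filter (d < ·))
  have hd : ∀ j ∈ S, d < j := by simp +contextual [S, hi]
  have hiS : i ∈ S := mem_insert_self _ _
  rw [Bprod_eq_prod_bFactor _ _ _ _ _ (filter_support_add_single_subset ν i) hd,
    Bprod_eq_prod_bFactor _ _ _ _ _ (subset_insert _ _) hd, tailSum_add_single hi,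
    ← mul_prod_erase S _ hiS, ← mul_prod_erase S _ hiS]
  have hsum : ∑ j ∈ S, ν j = tailSum d ν := (tailSum_eq_sum_of_subset (subset_insert _ _) hd).symm
  set M := tailSum d ν
  have hβ₀ : 0 < β := lt_of_lt_of_le (by positivity) hβ
  have hF : ∀ (N : ℕ) j n, 0 ≤ bFactor c γ ε (b j) β N n := fun N j =>
    bFactor_nonneg hc hε (hb j).le hβ₀.le N.cast_nonneg
  set f := fun j => bFactor c γ ε (b j) β M (ν j)
  have h_i : bFactor c γ ε (b i) β (M + 1 : ℕ) ((ν + Finsupp.single i 1 : ℕ →₀ ℕ) i) ≤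
      (exp 1)⁻¹ * f i := by
    simpa using bFactor_succ_le hc hγ hε (hb i) hβ (M := M)
      (by exact_mod_cast hsum ▸ single_le_sum (fun _ _ => Nat.zero_le _) hiS)
  have h_j : ∀ j ∈ S.erase i, bFactor c γ ε (b j) β (M + 1 : ℕ)
      ((ν + Finsupp.single i 1 : ℕ →₀ ℕ) j) ≤ (1 + (M : ℝ)⁻¹) ^ ν j * f j := fun j hj => by
    simpa [Finsupp.single_apply, (ne_of_mem_erase hj).symm] using
      bFactor_add_one_le hc hε (hb j) hβ₀ M.cast_nonneg (ν j)
  have h_rest : ∏ j ∈ S.erase i, (1 + (M : ℝ)⁻¹) ^ ν j ≤ exp 1 := by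
    rw [prod_pow_eq_pow_sum]
    calc (1 + (M : ℝ)⁻¹) ^ ∑ j ∈ S.erase i, ν j ≤ (1 + (M : ℝ)⁻¹) ^ M := by
          gcongr
          · exact le_add_of_nonneg_right (by positivity)
          · exact hsum ▸ sum_le_sum_of_subset (erase_subset i S)
      _ ≤ exp 1 := one_add_inv_pow_le_exp
  calc _ ≤ (exp 1)⁻¹ * f i * ∏ j ∈ S.erase i, (1 + (M : ℝ)⁻¹) ^ ν j * f j :=
        mul_le_mul h_i (prod_le_prod (fun j _ => hF _ _ _) h_j)
          (prod_nonneg fun j _ => hF _ _ _) (mul_nonneg (by positivity) (hF _ _ _))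
    _ = ((exp 1)⁻¹ * ∏ j ∈ S.erase i, (1 + (M : ℝ)⁻¹) ^ ν j) * (f i * ∏ j ∈ S.erase i, f j) := by
        rw [prod_mul_distrib]; ring
    _ ≤ f i * ∏ j ∈ S.erase i, f j := by
        refine mul_le_of_le_one_left (mul_nonneg (hF _ _ _) (prod_nonneg fun j _ => hF _ _ _)) ?_
        rw [inv_mul_le_iff₀ (exp_pos 1), mul_one]
        exact h_rest

theorem stmt15_general (ctil γtil ε : ℝ) (hc : 0 < ctil) (hγ : 0 < γtil) (hε : 0 < ε)
    (d : ℕ) (btil : ℕ → ℝ) (hbpos : ∀ j, 0 < btil j)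
    (β : ℝ) (hβ : Real.exp 1 * (max ctil 1 + 1) ^ γtil ≤ β) :
    ∀ ν : ℕ →₀ ℕ, ∀ i : ℕ, d < i →
      Bprod ctil γtil ε d btil β (ν + Finsupp.single i 1)
        ≤ Bprod ctil γtil ε d btil β ν := by
  intro ν i hi
  refine Bprod_add_single_le hc.le hγ.le hε.le hbpos (le_trans ?_ hβ) ν hi
  gcongr
  exact le_max_left _ _

/-- monotonicity of the majorizing sequence `B̃_F`. If `c̃, γ̃, ε > 0`,
`b̃ : ℕ → (0,∞)` is nonincreasing and `β ≥ e · (max{c̃,1} + 1)^γ̃`, then incrementing any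
coordinate `i > d` of a multi-index `ν` does not increase `B(ν)`. -/
theorem stmt15 (ctil γtil ε : ℝ) (hc : 0 < ctil) (hγ : 0 < γtil) (hε : 0 < ε)
    (d : ℕ) (btil : ℕ → ℝ) (hbpos : ∀ j, 0 < btil j) (hbmono : Antitone btil)
    (β : ℝ) (hβ : Real.exp 1 * (max ctil 1 + 1) ^ γtil ≤ β) :
    ∀ ν : ℕ →₀ ℕ, ∀ i : ℕ, d < i →
      Bprod ctil γtil ε d btil β (ν + Finsupp.single i 1)
        ≤ Bprod ctil γtil ε d btil β ν :=
  stmt15_general ctil γtil ε hc hγ hε d btil hbpos β hβ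
end

section
/- Let t : 𝓕 → [0,∞) be anchored (i.e., t_ν ≥ t_μ whenever ν ≤ μ, and t_{e_j} ≤ t_{e_i} whenever i ≤ j), and suppose that for every δ > 0 the set {ν ∈ 𝓕 : t_ν > δ} is finite. Then for every s ∈ ℕ there exists an anchored set S ⊆ 𝓕 with exactly s elements such that t_ν ≥ t_μ for every ν ∈ S and every μ ∈ 𝓕 ∖ S. -/
/-!
Build `S` one element at a time. Given an anchored `S` dominating its complement, `t` attains
its maximum on the complement (its positive superlevel sets are finite and `t ≥ 0`); since `t`
is antitone, a minimal maximizer `μ` has all its strict predecessors in `S`. Adding `μ` keeps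
`S` lower; if `μ = e_k`, add instead `e_i` with `i` the least index such that `e_i ∉ S`, which is
still a maximizer because `t_{e_i} ≥ t_{e_k}`.
-/

/-- A set `S` of multi-indices is anchored if it is lower (downward closed for the
componentwise order) and, whenever `e_j ∈ S`, also `e_i ∈ S` for all `i ≤ j`. -/
def IsAnchoredSet (S : Set (ℕ →₀ ℕ)) : Prop :=
  (∀ ν ∈ S, ∀ μ : ℕ →₀ ℕ, μ ≤ ν → μ ∈ S) ∧
  (∀ j : ℕ, Finsupp.single j 1 ∈ S → ∀ i : ℕ, i ≤ j → Finsupp.single i 1 ∈ S)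

open Finsupp

lemma eq_zero_of_lt_single_one {σ : Type*} {i : σ} {ρ : σ →₀ ℕ} (h : ρ < single i 1) :
    ρ = 0 := by
  by_contra hρ
  obtain ⟨j, hj⟩ := Finsupp.ne_iff.mp hρ
  have hji : j = i := by
    by_contra hne
    exact hj (by simpa [single_apply, Ne.symm hne] using h.le j)
  subst hji
  exact h.not_ge (single_le_iff.2 (Nat.one_le_iff_ne_zero.2 hj))

lemma exists_forall_le_of_finite_superlevel {α : Type*} {t : α → ℝ} (ht0 : ∀ a, 0 ≤ t a)
    (hfin : ∀ δ : ℝ, 0 < δ → {a | δ < t a}.Finite) {A : Set α} (hA : A.Nonempty) :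
    ∃ μ ∈ A, ∀ ρ ∈ A, t ρ ≤ t μ := by
  by_cases hpos : ∃ ρ ∈ A, 0 < t ρ
  · obtain ⟨ρ, hρA, hρ⟩ := hpos
    have hfinA : (A ∩ {a | t ρ ≤ t a}).Finite :=
      (hfin (t ρ / 2) (by positivity)).subset fun a ha => by
        have : t ρ ≤ t a := ha.2
        show t ρ / 2 < t a; linarith
    obtain ⟨μ, ⟨hμA, hρμ⟩, hμ⟩ := Set.exists_max_image _ t hfinA ⟨ρ, hρA, le_refl (t ρ)⟩
    refine ⟨μ, hμA, fun σ hσA => ?_⟩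
    rcases le_or_gt (t ρ) (t σ) with hσ | hσ
    exacts [hμ σ ⟨hσA, hσ⟩, hσ.le.trans hρμ]
  · push Not at hpos
    obtain ⟨μ, hμA⟩ := hA
    exact ⟨μ, hμA, fun ρ hρA => (hpos ρ hρA).trans (ht0 μ)⟩

lemma isAnchoredSet_empty : IsAnchoredSet ∅ := ⟨by simp, by simp⟩

lemma IsAnchoredSet.insert {S : Set (ℕ →₀ ℕ)} {μ : ℕ →₀ ℕ} (hS : IsAnchoredSet S)
    (hlt : ∀ ρ < μ, ρ ∈ S) (hsingle : ∀ j, μ = single j 1 → ∀ i < j, single i 1 ∈ S) :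
    IsAnchoredSet (insert μ S) := by
  refine ⟨?_, ?_⟩
  · rintro ν (rfl | hν) ρ hρ
    · exact hρ.eq_or_lt.imp id (hlt ρ)
    · exact Or.inr (hS.1 ν hν ρ hρ)
  · rintro j (hj | hj) i hij
    · rcases hij.eq_or_lt with rfl | hij
      exacts [Or.inl hj, Or.inr (hsingle j hj.symm i hij)]
    · exact Or.inr (hS.2 j hj i hij)

lemma exists_insert_isAnchoredSet {t : (ℕ →₀ ℕ) → ℝ} (hmono : ∀ ν μ : ℕ →₀ ℕ, ν ≤ μ → t μ ≤ t ν)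
    (hanch : ∀ i j : ℕ, i ≤ j → t (single j 1) ≤ t (single i 1))
    {S : Set (ℕ →₀ ℕ)} (hS : IsAnchoredSet S) (hmax : ∃ μ ∉ S, ∀ ρ ∉ S, t ρ ≤ t μ) :
    ∃ μ ∉ S, IsAnchoredSet (insert μ S) ∧ ∀ ρ ∉ S, t ρ ≤ t μ := by
  classical
  obtain ⟨μ, ⟨hμS, hμmax⟩, hμmin⟩ :=
    WellFoundedLT.exists_minimal inferInstance {μ | μ ∉ S ∧ ∀ ρ ∉ S, t ρ ≤ t μ} hmax
  have hlt : ∀ ρ < μ, ρ ∈ S := fun ρ hρ => by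
    by_contra hρS
    exact hρ.not_ge (hμmin ⟨hρS, fun σ hσ => (hμmax σ hσ).trans (hmono ρ μ hρ.le)⟩ hρ.le)
  by_cases hμsingle : ∃ k, μ = single k 1
  · obtain ⟨k, rfl⟩ := hμsingle
    have hex : ∃ i, single i 1 ∉ S := ⟨k, hμS⟩
    have h0 : (0 : ℕ →₀ ℕ) ∈ S := hlt 0 (pos_iff_ne_zero.2 (by simp))
    refine ⟨single (Nat.find hex) 1, Nat.find_spec hex, hS.insert ?_ ?_, ?_⟩
    · exact fun ρ hρ => eq_zero_of_lt_single_one hρ ▸ h0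
    · intro j hj i hij
      rw [← single_left_injective one_ne_zero hj] at hij
      exact not_not.1 (Nat.find_min hex hij)
    · exact fun ρ hρ => (hμmax ρ hρ).trans (hanch _ _ (Nat.find_min' hex hμS))
  · push Not at hμsingle
    exact ⟨μ, hμS, hS.insert hlt fun j hj => absurd hj (hμsingle j), hμmax⟩

/-- existence of anchored sets of largest elements.
Let `t : 𝓕 → [0,∞)` be anchored (nonincreasing for the componentwise order, and
`t_{e_j} ≤ t_{e_i}` for `i ≤ j`) and suppose `{ν : t_ν > δ}` is finite for every `δ > 0`.
Then for every `s ∈ ℕ` there is an anchored set `S` with exactly `s` elements such that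
`t_ν ≥ t_μ` for every `ν ∈ S` and every `μ ∉ S`. -/
theorem stmt16 (t : (ℕ →₀ ℕ) → ℝ) (ht0 : ∀ ν, 0 ≤ t ν)
    (hmono : ∀ ν μ : ℕ →₀ ℕ, ν ≤ μ → t μ ≤ t ν)
    (hanch : ∀ i j : ℕ, i ≤ j → t (Finsupp.single j 1) ≤ t (Finsupp.single i 1))
    (hfin : ∀ δ : ℝ, 0 < δ → {ν : ℕ →₀ ℕ | δ < t ν}.Finite) :
    ∀ s : ℕ, ∃ S : Finset (ℕ →₀ ℕ),
      IsAnchoredSet (↑S : Set (ℕ →₀ ℕ)) ∧ S.card = s ∧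
      ∀ ν ∈ S, ∀ μ : ℕ →₀ ℕ, μ ∉ S → t μ ≤ t ν := by
  intro s
  induction s with
  | zero => exact ⟨∅, by simpa using isAnchoredSet_empty, rfl, by simp⟩
  | succ n ih =>
    obtain ⟨S, hS, rfl, hdom⟩ := ih
    have hmax : ∃ μ ∉ (S : Set (ℕ →₀ ℕ)), ∀ ρ ∉ (S : Set (ℕ →₀ ℕ)), t ρ ≤ t μ :=
      exists_forall_le_of_finite_superlevel ht0 hfin (Infinite.exists_notMem_finset S)
    obtain ⟨μ, hμS, hμ, hμmax⟩ := exists_insert_isAnchoredSet hmono hanch hS hmax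
    refine ⟨insert μ S, by simpa using hμ, Finset.card_insert_of_notMem hμS, ?_⟩
    intro ν hν ρ hρ
    rw [Finset.mem_insert, not_or] at hρ
    rcases Finset.mem_insert.1 hν with rfl | hν
    exacts [hμmax ρ hρ.2, hdom ν hν ρ hρ.2]
end
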